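/- There exists a constant C > 0, independent of x and q, such that for every x ∈ (0,∞) and every q ∈ ℝ³ with |q| ≥ 3 one has I₂^{(q)}(x) ≤ C x³/|q|⁴. (For |q| ≥ 3 only the second summand of I₂^{(q)} contributes, and on its domain |q|² − |q−p|² + |r'−p|² − |r'|² ≥ |q|² − 1 ≥ c|q|².) -/

import Mathlib

open MeasureTheory
open scoped ENNReal

noncomputable abbrev E3 := EuclideanSpace ℝ (Fin 3)

/-- The Belyakov-type integral `I₂^{(q)}(x)` of Lemma B.2, with the Dirac deltas
`δ(r-q)` and `δ(r+p-q)` evaluated explicitly. -/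
noncomputable def belyakovI2q (x : ℝ) (q : E3) : ℝ≥0∞ :=
  ∫⁻ p : E3,
    ({p : E3 | ‖q‖ < 1 ∧ 1 < ‖q + p‖}.indicator
      (fun p => ∫⁻ r' in {r' : E3 | ‖r'‖ < x ∧ x < ‖r' - p‖},
        ENNReal.ofReal (1 / (‖q + p‖ ^ 2 - ‖q‖ ^ 2 + ‖r' - p‖ ^ 2 - ‖r'‖ ^ 2) ^ 2)) p)
    +
    ({p : E3 | ‖q - p‖ < 1 ∧ 1 < ‖q‖}.indicator
      (fun p => ∫⁻ r' in {r' : E3 | ‖r'‖ < x ∧ x < ‖r' - p‖},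
        ENNReal.ofReal (1 / (‖q‖ ^ 2 - ‖q - p‖ ^ 2 + ‖r' - p‖ ^ 2 - ‖r'‖ ^ 2) ^ 2)) p)

/-!
For `|q| > 1` only the second summand survives. On its domain `|q - p| < 1` and
`|r'| < x < |r' - p|`, so the denominator is at least `|q|² - 1`: the integrand is bounded by
`(|q|² - 1)⁻²` on a set of `(p, r')` inside `B(q, 1) × B(0, x)`, whose volume is a constant times
`x³`. Finally `(|q|² - 1)⁻² ≤ (81/64) |q|⁻⁴` once `|q| ≥ 3`.
-/

section

variable {E : Type*} [NormedAddCommGroup E]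

lemma sq_norm_sub_one_lt_of_norm_sub_lt_one {x : ℝ} {p q r : E} (hpq : ‖q - p‖ < 1)
    (hr : ‖r‖ < x) (hrp : x < ‖r - p‖) :
    ‖q‖ ^ 2 - 1 < ‖q‖ ^ 2 - ‖q - p‖ ^ 2 + ‖r - p‖ ^ 2 - ‖r‖ ^ 2 := by
  have hqp : ‖q - p‖ ^ 2 < 1 := by nlinarith [norm_nonneg (q - p)]
  have hrr : ‖r‖ ^ 2 < ‖r - p‖ ^ 2 := by nlinarith [norm_nonneg r]
  linarith

lemma setLIntegral_one_div_sq_le_of_norm_sub_lt_one [MeasurableSpace E] (μ : Measure E)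
    {x : ℝ} {p q : E} (hpq : ‖q - p‖ < 1) (hq : 1 < ‖q‖) :
    ∫⁻ r in {r : E | ‖r‖ < x ∧ x < ‖r - p‖},
        ENNReal.ofReal (1 / (‖q‖ ^ 2 - ‖q - p‖ ^ 2 + ‖r - p‖ ^ 2 - ‖r‖ ^ 2) ^ 2) ∂μ
      ≤ ENNReal.ofReal (1 / (‖q‖ ^ 2 - 1) ^ 2) * μ (Metric.ball 0 x) := by
  have hq2 : 0 < ‖q‖ ^ 2 - 1 := by nlinarith
  calc _ ≤ ∫⁻ _ in {r : E | ‖r‖ < x ∧ x < ‖r - p‖}, ENNReal.ofReal (1 / (‖q‖ ^ 2 - 1) ^ 2) ∂μ :=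
        setLIntegral_mono measurable_const fun r ⟨hr, hrp⟩ => by
          have hD := sq_norm_sub_one_lt_of_norm_sub_lt_one hpq hr hrp
          gcongr
    _ = ENNReal.ofReal (1 / (‖q‖ ^ 2 - 1) ^ 2) * μ {r : E | ‖r‖ < x ∧ x < ‖r - p‖} :=
        setLIntegral_const _ _
    _ ≤ _ := by
        gcongr
        intro r hr
        simpa using hr.1

end

lemma one_div_sq_sub_one_sq_le {a : ℝ} (ha : 3 ≤ a) :
    1 / (a ^ 2 - 1) ^ 2 ≤ 81 / 64 / a ^ 4 := by
  have h8 : 8 / 9 * a ^ 2 ≤ a ^ 2 - 1 := by nlinarith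
  rw [div_div, div_le_div_iff₀ (pow_pos (by linarith) 2) (by positivity)]
  nlinarith [mul_le_mul h8 h8 (by positivity) (by linarith)]

lemma belyakovI2q_le_of_one_lt_norm (x : ℝ) {q : E3} (hq : 1 < ‖q‖) :
    belyakovI2q x q ≤ ENNReal.ofReal (1 / (‖q‖ ^ 2 - 1) ^ 2) * volume (Metric.ball (0 : E3) x)
      * volume (Metric.ball q 1) := by
  rw [← lintegral_indicator_const measurableSet_ball]
  refine lintegral_mono fun p => ?_
  rw [Set.indicator_of_notMem (fun h => hq.not_gt h.1), zero_add]
  refine Set.indicator_apply_le' (fun ⟨hp, _⟩ => ?_) fun _ => zero_le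
  rw [Set.indicator_of_mem (by rwa [Metric.mem_ball, dist_comm, dist_eq_norm])]
  exact setLIntegral_one_div_sq_le_of_norm_sub_lt_one volume hp hq

/-- Upper bound `I₂^{(q)}(x) ≤ C x³/|q|⁴` for `|q| ≥ 3` and all `x > 0`. -/
theorem belyakovI2q_upper_bound_large_q :
    ∃ C : ℝ, 0 < C ∧ ∀ (x : ℝ) (q : E3), 0 < x → 3 ≤ ‖q‖ →
      belyakovI2q x q ≤ ENNReal.ofReal (C * x ^ 3 / ‖q‖ ^ 4) := by
  obtain ⟨v, hv, hV⟩ : ∃ v : ℝ, 0 < v ∧ volume (Metric.ball (0 : E3) 1) = ENNReal.ofReal v :=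
    ⟨_, ENNReal.toReal_pos (Metric.measure_ball_pos _ _ one_pos).ne' measure_ball_lt_top.ne,
      (ENNReal.ofReal_toReal measure_ball_lt_top.ne).symm⟩
  refine ⟨81 / 64 * v ^ 2, by positivity, fun x q hx hq => ?_⟩
  have hq1 : 0 < ‖q‖ ^ 2 - 1 := by nlinarith
  calc belyakovI2q x q
      ≤ ENNReal.ofReal (1 / (‖q‖ ^ 2 - 1) ^ 2) * volume (Metric.ball (0 : E3) x)
          * volume (Metric.ball q 1) := belyakovI2q_le_of_one_lt_norm x (by linarith)
    _ = ENNReal.ofReal (1 / (‖q‖ ^ 2 - 1) ^ 2 * x ^ 3 * v ^ 2) := by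
        rw [Measure.addHaar_ball_of_pos _ _ hx, Measure.addHaar_ball_of_pos _ q one_pos,
          finrank_euclideanSpace_fin, one_pow, ENNReal.ofReal_one, one_mul, hV,
          ← ENNReal.ofReal_mul (by positivity), ← ENNReal.ofReal_mul (by positivity),
          ← ENNReal.ofReal_mul (by positivity)]
        ring_nf
    _ ≤ ENNReal.ofReal (81 / 64 * v ^ 2 * x ^ 3 / ‖q‖ ^ 4) := by
        refine ENNReal.ofReal_le_ofReal ?_
        have := one_div_sq_sub_one_sq_le hq
        calc 1 / (‖q‖ ^ 2 - 1) ^ 2 * x ^ 3 * v ^ 2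
            ≤ 81 / 64 / ‖q‖ ^ 4 * x ^ 3 * v ^ 2 := by gcongr
          _ = _ := by ring
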